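/- arXiv:0808.0123 — 4 statements merged into one kernel-verified Lean document; each statement's English description precedes it below -/
import Mathlib

section
/- Let ξ : [0, Y₀) → ℝ be a C² solution of ξ''(y) + (1/4)ξ'(y) − (1/(2y)) ξ(y) ξ'(y) = 0 on (0, Y₀) with ξ(0) = 0 and ξ'(0) = a. If a > 1/2, then ξ'(y) > 1/2 for all y ∈ [0, Y₀). -/
/-!
Suppose `ξ'` reaches `1/2` and let `t > 0` be the first such point. On `[0, t)` we have
`ξ' > 1/2`, so `ξ(y) > y/2` there, and the equation `ξ'' = ξ' (ξ - y/2) / (2y)` makes `ξ''`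
positive on `(0, t)`. Hence `ξ'` increases on `[0, t]`, giving `ξ'(t) > ξ'(0) = a > 1/2`.
-/

open Set

theorem exists_first_le_of_continuousOn {f : ℝ → ℝ} {a b c : ℝ} (hab : a ≤ b)
    (hf : ContinuousOn f (Icc a b)) (ha : c < f a) (hb : f b ≤ c) :
    ∃ t ∈ Ioc a b, f t ≤ c ∧ ∀ y ∈ Ico a t, c < f y := by
  set S := Icc a b ∩ f ⁻¹' Iic c
  have hS : IsClosed S := hf.preimage_isClosed_of_isClosed isClosed_Icc isClosed_Iic
  have hbdd : BddBelow S := ⟨a, fun x hx => hx.1.1⟩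
  obtain ⟨⟨hat, htb⟩, hft⟩ := hS.csInf_mem ⟨b, ⟨hab, le_rfl⟩, hb⟩ hbdd
  refine ⟨sInf S, ⟨hat.lt_of_ne ?_, htb⟩, hft, fun y hy => ?_⟩
  · intro h
    rw [← h] at hft
    exact (not_le.2 ha) hft
  · by_contra! hy'
    exact (csInf_le hbdd ⟨⟨hy.1, hy.2.le.trans htb⟩, hy'⟩).not_gt hy.2

theorem profile_second_deriv_pos {y u u' u'' : ℝ} (hy : 0 < y) (hu : y / 2 < u) (hu' : 0 < u')
    (heq : u'' + (1 / 4) * u' - (1 / (2 * y)) * u * u' = 0) : 0 < u'' := by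
  have hu'' : u'' = u' * (u - y / 2) / (2 * y) := by
    field_simp at heq ⊢
    linarith
  rw [hu'']
  exact div_pos (mul_pos hu' (sub_pos.2 hu)) (by positivity)

section Profile

variable {Y₀ t : ℝ} {ξ ξ' ξ'' : ℝ → ℝ}

theorem half_mul_lt_profile (ht : t < Y₀) (hcont : ContinuousOn ξ (Ico 0 Y₀))
    (hderiv : ∀ y ∈ Ioo 0 Y₀, HasDerivAt ξ (ξ' y) y) (hξ0 : ξ 0 = 0)
    (hξ' : ∀ y ∈ Ico 0 t, 1 / 2 < ξ' y) {y : ℝ} (hy : y ∈ Ioc 0 t) : y / 2 < ξ y := by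
  have hIcc : Icc 0 t ⊆ Ico 0 Y₀ := fun x hx => ⟨hx.1, hx.2.trans_lt ht⟩
  have hmono : StrictMonoOn (fun x => ξ x - x / 2) (Icc 0 t) := by
    refine strictMonoOn_of_hasDerivWithinAt_pos (f' := fun x => ξ' x - 1 / 2) (convex_Icc 0 t)
      ((hcont.mono hIcc).sub (continuousOn_id.div_const 2)) (fun x hx => ?_) (fun x hx => ?_)
    · rw [interior_Icc] at hx ⊢
      exact ((hderiv x ⟨hx.1, hx.2.trans ht⟩).sub ((hasDerivAt_id x).div_const 2)).hasDerivWithinAt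
    · rw [interior_Icc] at hx
      linarith [hξ' x ⟨hx.1.le, hx.2⟩]
  have hgain := hmono ⟨le_rfl, hy.1.le.trans hy.2⟩ ⟨hy.1.le, hy.2⟩ hy.1
  simp only [hξ0] at hgain
  linarith

theorem profile_derivative_strictMonoOn (ht : t < Y₀) (hcont : ContinuousOn ξ (Ico 0 Y₀))
    (hcont' : ContinuousOn ξ' (Ico 0 Y₀)) (hderiv : ∀ y ∈ Ioo 0 Y₀, HasDerivAt ξ (ξ' y) y)
    (hderiv' : ∀ y ∈ Ioo 0 Y₀, HasDerivAt ξ' (ξ'' y) y)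
    (heq : ∀ y ∈ Ioo 0 Y₀, ξ'' y + (1 / 4) * ξ' y - (1 / (2 * y)) * ξ y * ξ' y = 0)
    (hξ0 : ξ 0 = 0) (hξ' : ∀ y ∈ Ico 0 t, 1 / 2 < ξ' y) : StrictMonoOn ξ' (Icc 0 t) := by
  have hIoo : Ioo 0 t ⊆ Ioo 0 Y₀ := fun x hx => ⟨hx.1, hx.2.trans ht⟩
  refine strictMonoOn_of_hasDerivWithinAt_pos (f' := ξ'') (convex_Icc 0 t)
    (hcont'.mono fun x hx => ⟨hx.1, hx.2.trans_lt ht⟩) (fun x hx => ?_) (fun y hy => ?_)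
  · rw [interior_Icc] at hx ⊢
    exact (hderiv' x (hIoo hx)).hasDerivWithinAt
  · rw [interior_Icc] at hy
    exact profile_second_deriv_pos hy.1
      (half_mul_lt_profile ht hcont hderiv hξ0 hξ' ⟨hy.1, hy.2.le⟩)
      (by linarith [hξ' y ⟨hy.1.le, hy.2⟩]) (heq y (hIoo hy))

end Profile

theorem profile_derivative_above_half_general (Y₀ a : ℝ)
    (ξ ξ' ξ'' : ℝ → ℝ)
    (hcont : ContinuousOn ξ (Set.Ico 0 Y₀))
    (hcont' : ContinuousOn ξ' (Set.Ico 0 Y₀))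
    (hderiv : ∀ y ∈ Set.Ioo (0 : ℝ) Y₀, HasDerivAt ξ (ξ' y) y)
    (hderiv' : ∀ y ∈ Set.Ioo (0 : ℝ) Y₀, HasDerivAt ξ' (ξ'' y) y)
    (heq : ∀ y ∈ Set.Ioo (0 : ℝ) Y₀,
      ξ'' y + (1 / 4) * ξ' y - (1 / (2 * y)) * ξ y * ξ' y = 0)
    (hξ0 : ξ 0 = 0) (ha : ξ' 0 = a) (hahalf : 1 / 2 < a) :
    ∀ y ∈ Set.Ico (0 : ℝ) Y₀, 1 / 2 < ξ' y := by
  by_contra! ⟨s, hs, hξ's⟩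
  obtain ⟨t, ht, hξ't, hξ'_before⟩ := exists_first_le_of_continuousOn hs.1
    (hcont'.mono fun x hx => ⟨hx.1, hx.2.trans_lt hs.2⟩) (ha ▸ hahalf) hξ's
  have hmono := profile_derivative_strictMonoOn (ht.2.trans_lt hs.2) hcont hcont' hderiv hderiv'
    heq hξ0 hξ'_before
  linarith [hmono ⟨le_rfl, ht.1.le⟩ ⟨ht.1.le, le_rfl⟩ ht.1]

/-- If ξ solves ξ'' + ξ'/4 - ξξ'/(2y) = 0 on (0,Y₀) with ξ(0) = 0, ξ'(0) = a > 1/2,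
then ξ'(y) > 1/2 on [0,Y₀). -/
theorem profile_derivative_above_half (Y₀ a : ℝ) (hY₀ : 0 < Y₀)
    (ξ ξ' ξ'' : ℝ → ℝ)
    (hcont : ContinuousOn ξ (Set.Ico 0 Y₀))
    (hcont' : ContinuousOn ξ' (Set.Ico 0 Y₀))
    (hderiv0 : HasDerivWithinAt ξ (ξ' 0) (Set.Ici 0) 0)
    (hderiv : ∀ y ∈ Set.Ioo (0 : ℝ) Y₀, HasDerivAt ξ (ξ' y) y)
    (hderiv' : ∀ y ∈ Set.Ioo (0 : ℝ) Y₀, HasDerivAt ξ' (ξ'' y) y)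
    (heq : ∀ y ∈ Set.Ioo (0 : ℝ) Y₀,
      ξ'' y + (1 / 4) * ξ' y - (1 / (2 * y)) * ξ y * ξ' y = 0)
    (hξ0 : ξ 0 = 0) (ha : ξ' 0 = a) (hahalf : 1 / 2 < a) :
    ∀ y ∈ Set.Ico (0 : ℝ) Y₀, 1 / 2 < ξ' y :=
  profile_derivative_above_half_general Y₀ a ξ ξ' ξ'' hcont hcont' hderiv hderiv' heq hξ0 ha hahalf
end

section
/- Let ξ : [0, Y₀] → ℝ be a C² solution of ξ''(y) + (1/4)ξ'(y) − (1/(2y)) ξ(y) ξ'(y) = 0 on (0, Y₀) with ξ(0) = 0 and ξ'(0) = a, where 0 < a < 1/2. Then for all y ∈ (0, Y₀]: 0 < ξ'(y) < a, −1/8 < ξ''(y) < 0, and 0 < ξ(y) < a·y. -/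
/-!
Written as `(e^{y/4} ξ')' = e^{y/4} ξ ξ' / (2y)` and `ξ'' = ξ' (ξ/(2y) - 1/4)`, the equation
shows: if `ξ' ≥ 0` and `ξ ≤ c y` on `[0, b]` for some `c < 1/2`, then `ξ' > 0` and `ξ'' < 0` on
`(0, b]`, hence `ξ' < a`, `0 < ξ < a y` and `ξ'' ≥ -ξ'/4 > -1/8` there. For `a < c < 1/2` these
conclusions are strict improvements of the assumptions (also at `y = 0`, where the right slope
of `ξ` is `a < c`), so by continuous induction the assumptions hold on all of `[0, Y₀]`.
-/

open Set Filter Topology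

theorem HasDerivWithinAt.eventually_lt_const_mul {f : ℝ → ℝ} {f' x c : ℝ}
    (hf : HasDerivWithinAt f f' (Ici x) x) (hfx : f x ≤ c * x) (hf' : f' < c) :
    ∀ᶠ z in 𝓝[>] x, f z < c * z := by
  filter_upwards [hf.Ioi_of_Ici.limsup_slope_le' (lt_irrefl x) hf', self_mem_nhdsWithin]
    with z hslope hxz
  rw [slope_def_field, div_lt_iff₀ (sub_pos.2 hxz)] at hslope
  linarith

theorem monotoneOn_Icc_of_hasDerivAt_nonneg {f f' : ℝ → ℝ} {a b : ℝ}
    (hf : ContinuousOn f (Icc a b)) (hf' : ∀ x ∈ Ioo a b, HasDerivAt f (f' x) x)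
    (hnonneg : ∀ x ∈ Ioo a b, 0 ≤ f' x) : MonotoneOn f (Icc a b) :=
  monotoneOn_of_hasDerivWithinAt_nonneg (convex_Icc a b) hf
    (fun x hx ↦ by rw [interior_Icc] at hx ⊢; exact (hf' x hx).hasDerivWithinAt)
    (by rwa [interior_Icc])

theorem strictMonoOn_Icc_of_hasDerivAt_pos {f f' : ℝ → ℝ} {a b : ℝ}
    (hf : ContinuousOn f (Icc a b)) (hf' : ∀ x ∈ Ioo a b, HasDerivAt f (f' x) x)
    (hpos : ∀ x ∈ Ioo a b, 0 < f' x) : StrictMonoOn f (Icc a b) :=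
  strictMonoOn_of_hasDerivWithinAt_pos (convex_Icc a b) hf
    (fun x hx ↦ by rw [interior_Icc] at hx ⊢; exact (hf' x hx).hasDerivWithinAt)
    (by rwa [interior_Icc])

structure IsProfileSolution (Y : ℝ) (ξ ξ' ξ'' : ℝ → ℝ) : Prop where
  continuousOn : ContinuousOn ξ (Icc 0 Y)
  continuousOn_deriv : ContinuousOn ξ' (Icc 0 Y)
  hasDerivAt : ∀ y ∈ Ioc 0 Y, HasDerivAt ξ (ξ' y) y
  hasDerivAt_deriv : ∀ y ∈ Ioc 0 Y, HasDerivAt ξ' (ξ'' y) y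
  ode : ∀ y ∈ Ioc 0 Y, ξ'' y + (1 / 4) * ξ' y - (1 / (2 * y)) * ξ y * ξ' y = 0

namespace IsProfileSolution

variable {Y b c y : ℝ} {ξ ξ' ξ'' : ℝ → ℝ}

theorem mono (h : IsProfileSolution Y ξ ξ' ξ'') (hb : b ≤ Y) : IsProfileSolution b ξ ξ' ξ'' where
  continuousOn := h.continuousOn.mono (Icc_subset_Icc_right hb)
  continuousOn_deriv := h.continuousOn_deriv.mono (Icc_subset_Icc_right hb)
  hasDerivAt y hy := h.hasDerivAt y ⟨hy.1, hy.2.trans hb⟩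
  hasDerivAt_deriv y hy := h.hasDerivAt_deriv y ⟨hy.1, hy.2.trans hb⟩
  ode y hy := h.ode y ⟨hy.1, hy.2.trans hb⟩

theorem deriv_deriv_eq (h : IsProfileSolution Y ξ ξ' ξ'') (hy : y ∈ Ioc 0 Y) :
    ξ'' y = ξ' y * (ξ y / (2 * y) - 1 / 4) := by
  have := h.ode y hy
  have hy0 : y ≠ 0 := hy.1.ne'
  field_simp at this ⊢
  linarith

theorem deriv_deriv_neg (h : IsProfileSolution Y ξ ξ' ξ'') (hy : y ∈ Ioc 0 Y)
    (hpos : 0 < ξ' y) (hξ : 2 * ξ y < y) : ξ'' y < 0 := by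
  rw [h.deriv_deriv_eq hy]
  refine mul_neg_of_pos_of_neg hpos ?_
  rw [sub_neg, div_lt_iff₀ (by linarith [hy.1])]
  linarith

theorem neg_eighth_lt_deriv_deriv (h : IsProfileSolution Y ξ ξ' ξ'') (hy : y ∈ Ioc 0 Y)
    (hnonneg : 0 ≤ ξ' y) (hξ : 0 ≤ ξ y) (hlt : ξ' y < 1 / 2) : -(1 / 8) < ξ'' y := by
  have : 0 ≤ ξ' y * (ξ y / (2 * y)) := mul_nonneg hnonneg (div_nonneg hξ (by linarith [hy.1]))
  rw [h.deriv_deriv_eq hy]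
  linarith

theorem deriv_pos_of_deriv_nonneg (h : IsProfileSolution b ξ ξ' ξ'') (hξ0 : ξ 0 = 0)
    (ha0 : 0 < ξ' 0) (hnonneg : ∀ t ∈ Icc 0 b, 0 ≤ ξ' t) : ∀ t ∈ Icc 0 b, 0 < ξ' t := by
  have hξ : ∀ t ∈ Icc 0 b, 0 ≤ ξ t := fun t ht ↦ hξ0 ▸
    monotoneOn_Icc_of_hasDerivAt_nonneg h.continuousOn
      (fun x hx ↦ h.hasDerivAt x (Ioo_subset_Ioc_self hx))
      (fun x hx ↦ hnonneg x (Ioo_subset_Icc_self hx)) (left_mem_Icc.2 (ht.1.trans ht.2)) ht ht.1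
  have hmono : MonotoneOn (fun t ↦ Real.exp (t / 4) * ξ' t) (Icc 0 b) := by
    refine monotoneOn_Icc_of_hasDerivAt_nonneg
      (f' := fun t ↦ Real.exp (t / 4) * (ξ'' t + 1 / 4 * ξ' t))
      ((Real.continuous_exp.comp (continuous_id.div_const 4)).continuousOn.mul
        h.continuousOn_deriv) (fun x hx ↦ ?_) (fun x hx ↦ ?_)
    · exact ((((hasDerivAt_id x).div_const 4).exp).mul
        (h.hasDerivAt_deriv x (Ioo_subset_Ioc_self hx))).congr_deriv (by simp only [id]; ring)
    · have hx0 : 0 < x := hx.1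
      have hx' : x ∈ Icc 0 b := Ioo_subset_Icc_self hx
      have hode : ξ'' x + 1 / 4 * ξ' x = 1 / (2 * x) * ξ x * ξ' x := by
        linarith [h.ode x (Ioo_subset_Ioc_self hx)]
      rw [hode]
      exact mul_nonneg (Real.exp_pos _).le
        (mul_nonneg (mul_nonneg (by positivity) (hξ x hx')) (hnonneg x hx'))
  intro t ht
  have := hmono (left_mem_Icc.2 (ht.1.trans ht.2)) ht ht.1
  simp only [zero_div, Real.exp_zero, one_mul] at this
  exact pos_of_mul_pos_right (ha0.trans_le this) (Real.exp_pos _).le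

theorem bounds_of_deriv_nonneg_of_le_mul (h : IsProfileSolution b ξ ξ' ξ'') (hξ0 : ξ 0 = 0)
    (ha0 : 0 < ξ' 0) (hahalf : ξ' 0 < 1 / 2) (hc : c < 1 / 2)
    (hle : ∀ t ∈ Icc 0 b, 0 ≤ ξ' t ∧ ξ t ≤ c * t) :
    ∀ t ∈ Ioc 0 b, 0 < ξ' t ∧ ξ' t < ξ' 0 ∧ -(1 / 8) < ξ'' t ∧ ξ'' t < 0 ∧
      0 < ξ t ∧ ξ t < ξ' 0 * t := by
  have hpos := h.deriv_pos_of_deriv_nonneg hξ0 ha0 fun t ht ↦ (hle t ht).1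
  have hneg : ∀ t ∈ Ioc 0 b, ξ'' t < 0 := fun t ht ↦
    h.deriv_deriv_neg ht (hpos t (Ioc_subset_Icc_self ht))
      (by nlinarith [(hle t (Ioc_subset_Icc_self ht)).2, ht.1])
  have hlt : ∀ t ∈ Ioc 0 b, ξ' t < ξ' 0 := fun t ht ↦ by
    have := strictMonoOn_Icc_of_hasDerivAt_pos h.continuousOn_deriv.neg
      (fun x hx ↦ (h.hasDerivAt_deriv x (Ioo_subset_Ioc_self hx)).neg)
      (fun x hx ↦ neg_pos.2 (hneg x (Ioo_subset_Ioc_self hx)))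
      (left_mem_Icc.2 (ht.1.le.trans ht.2)) (Ioc_subset_Icc_self ht) ht.1
    simpa using this
  have hξ_mono := strictMonoOn_Icc_of_hasDerivAt_pos h.continuousOn
    (fun x hx ↦ h.hasDerivAt x (Ioo_subset_Ioc_self hx))
    (fun x hx ↦ hpos x (Ioo_subset_Icc_self hx))
  have hgap_mono := strictMonoOn_Icc_of_hasDerivAt_pos (f := fun t ↦ ξ' 0 * t - ξ t)
    ((continuousOn_const.mul continuousOn_id).sub h.continuousOn)
    (fun x hx ↦
      ((hasDerivAt_id x).const_mul (ξ' 0)).sub (h.hasDerivAt x (Ioo_subset_Ioc_self hx)))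
    (fun x hx ↦ by simpa using hlt x (Ioo_subset_Ioc_self hx))
  intro t ht
  have h0 : (0 : ℝ) ∈ Icc 0 b := left_mem_Icc.2 (ht.1.le.trans ht.2)
  have hξpos : 0 < ξ t := hξ0 ▸ hξ_mono h0 (Ioc_subset_Icc_self ht) ht.1
  have hgap := hgap_mono h0 (Ioc_subset_Icc_self ht) ht.1
  simp only [mul_zero, hξ0, sub_zero, sub_pos] at hgap
  have hpos_t := hpos t (Ioc_subset_Icc_self ht)
  exact ⟨hpos_t, hlt t ht,
    h.neg_eighth_lt_deriv_deriv ht hpos_t.le hξpos.le ((hlt t ht).trans hahalf),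
    hneg t ht, hξpos, hgap⟩

theorem deriv_nonneg_and_le_mul (h : IsProfileSolution Y ξ ξ' ξ'') (hY : 0 ≤ Y)
    (hderiv0 : HasDerivWithinAt ξ (ξ' 0) (Ici 0) 0) (hξ0 : ξ 0 = 0) (ha0 : 0 < ξ' 0)
    (hac : ξ' 0 < c) (hc : c < 1 / 2) : ∀ t ∈ Icc 0 Y, 0 ≤ ξ' t ∧ ξ t ≤ c * t := by
  set K := {t ∈ Icc 0 Y | 0 ≤ ξ' t ∧ ξ t ≤ c * t}
  have hK : IsClosed K := by
    rw [show K = _ from sep_and]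
    exact (isClosed_Icc.isClosed_le continuousOn_const h.continuousOn_deriv).inter
      (isClosed_Icc.isClosed_le h.continuousOn (continuousOn_const.mul continuousOn_id))
  have hsub : Icc 0 Y ⊆ K := by
    refine (hK.inter isClosed_Icc).Icc_subset_of_forall_mem_nhdsGT_of_Icc_subset
      ⟨left_mem_Icc.2 hY, ha0.le, by simp [hξ0]⟩ fun x hx hxK ↦ ?_
    obtain ⟨hpos_x, hlt_x, hderiv_x⟩ :
        0 < ξ' x ∧ ξ' x < c ∧ HasDerivWithinAt ξ (ξ' x) (Ici x) x := by
      rcases hx.1.eq_or_lt with rfl | hx0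
      · exact ⟨ha0, hac, hderiv0⟩
      · have := (h.mono hx.2.le).bounds_of_deriv_nonneg_of_le_mul hξ0 ha0 (hac.trans hc) hc
          (fun t ht ↦ (hxK ht).2) x ⟨hx0, le_rfl⟩
        exact ⟨this.1, this.2.1.trans hac, (h.hasDerivAt x ⟨hx0, hx.2.le⟩).hasDerivWithinAt⟩
    have hIcc : Icc 0 Y ∈ 𝓝[>] x :=
      mem_of_superset (Ioo_mem_nhdsGT hx.2) (Ioo_subset_Icc_self.trans (Icc_subset_Icc_left hx.1))
    have hcont_x := (h.continuousOn_deriv x (Ico_subset_Icc_self hx)).mono_of_mem_nhdsWithin hIcc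
    filter_upwards [hIcc, hcont_x.eventually_const_lt hpos_x,
      hderiv_x.eventually_lt_const_mul (hxK (right_mem_Icc.2 hx.1)).2.2 hlt_x]
      with t ht hpos_t hlt_t
    exact ⟨ht, hpos_t.le, hlt_t.le⟩
  exact fun t ht ↦ (hsub ht).2

end IsProfileSolution

theorem profile_derivative_below_half_general (Y₀ a : ℝ)
    (ξ ξ' ξ'' : ℝ → ℝ)
    (hcont : ContinuousOn ξ (Set.Icc 0 Y₀))
    (hcont' : ContinuousOn ξ' (Set.Icc 0 Y₀))
    (hderiv0 : HasDerivWithinAt ξ (ξ' 0) (Set.Ici 0) 0)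
    (hderiv : ∀ y ∈ Set.Ioc (0 : ℝ) Y₀, HasDerivAt ξ (ξ' y) y)
    (hderiv' : ∀ y ∈ Set.Ioc (0 : ℝ) Y₀, HasDerivAt ξ' (ξ'' y) y)
    (heq : ∀ y ∈ Set.Ioc (0 : ℝ) Y₀,
      ξ'' y + (1 / 4) * ξ' y - (1 / (2 * y)) * ξ y * ξ' y = 0)
    (hξ0 : ξ 0 = 0) (ha : ξ' 0 = a) (ha0 : 0 < a) (hahalf : a < 1 / 2) :
    ∀ y ∈ Set.Ioc (0 : ℝ) Y₀,
      0 < ξ' y ∧ ξ' y < a ∧ -(1 / 8) < ξ'' y ∧ ξ'' y < 0 ∧ 0 < ξ y ∧ ξ y < a * y := by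
  intro y hy
  subst ha
  have h : IsProfileSolution Y₀ ξ ξ' ξ'' := ⟨hcont, hcont', hderiv, hderiv', heq⟩
  have hc : ξ' 0 < 1 / 4 + ξ' 0 / 2 := by linarith
  have hle := h.deriv_nonneg_and_le_mul (hy.1.le.trans hy.2) hderiv0 hξ0 ha0 hc (by linarith)
  exact h.bounds_of_deriv_nonneg_of_le_mul hξ0 ha0 hahalf (by linarith) hle y hy

/-- If ξ solves ξ'' + ξ'/4 - ξξ'/(2y) = 0 on (0,Y₀] with ξ(0) = 0, ξ'(0) = a,
0 < a < 1/2, then 0 < ξ'(y) < a, -1/8 < ξ''(y) < 0 and 0 < ξ(y) < a·y on (0,Y₀]. -/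
theorem profile_derivative_below_half (Y₀ a : ℝ) (hY₀ : 0 < Y₀)
    (ξ ξ' ξ'' : ℝ → ℝ)
    (hcont : ContinuousOn ξ (Set.Icc 0 Y₀))
    (hcont' : ContinuousOn ξ' (Set.Icc 0 Y₀))
    (hderiv0 : HasDerivWithinAt ξ (ξ' 0) (Set.Ici 0) 0)
    (hderiv : ∀ y ∈ Set.Ioc (0 : ℝ) Y₀, HasDerivAt ξ (ξ' y) y)
    (hderiv' : ∀ y ∈ Set.Ioc (0 : ℝ) Y₀, HasDerivAt ξ' (ξ'' y) y)
    (heq : ∀ y ∈ Set.Ioc (0 : ℝ) Y₀,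
      ξ'' y + (1 / 4) * ξ' y - (1 / (2 * y)) * ξ y * ξ' y = 0)
    (hξ0 : ξ 0 = 0) (ha : ξ' 0 = a) (ha0 : 0 < a) (hahalf : a < 1 / 2) :
    ∀ y ∈ Set.Ioc (0 : ℝ) Y₀,
      0 < ξ' y ∧ ξ' y < a ∧ -(1 / 8) < ξ'' y ∧ ξ'' y < 0 ∧ 0 < ξ y ∧ ξ y < a * y :=
  profile_derivative_below_half_general Y₀ a ξ ξ' ξ'' hcont hcont' hderiv0 hderiv hderiv' heq hξ0 ha
    ha0 hahalf
end

section
/- Let ξ : [0,∞) → ℝ be a global C² solution of ξ''(y) + (1/4)ξ'(y) − (1/(2y)) ξ(y) ξ'(y) = 0 with ξ(0) = 0 and ξ'(0) = a, 0 < a < 1/2, satisfying 0 < ξ'(y) < a and 0 < ξ(y) < ay for y > 0. Then with δ = (1/2)(1/2 − a): ξ'(y) < a e^{−δy} for all y > 0, lim_{y→∞} ξ'(y) = 0, the limit lim_{y→∞} ξ(y) exists and is finite, and ξ(y) < (4a/(1−2a))(1 − e^{(a−1/2)y/2}) for all y > 0. -/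
open Filter Real

/-- For a global solution of ξ'' + ξ'/4 - ξξ'/(2y) = 0 with ξ(0)=0, ξ'(0)=a ∈ (0,1/2),
0 < ξ' < a and 0 < ξ(y) < ay for y > 0, setting δ = (1/2)(1/2 - a), one has:
ξ'(y) < a e^{-δy}, ξ'(y) → 0, lim ξ(y) exists and is finite, and
ξ(y) < (4a/(1-2a))(1 - e^{(a-1/2)y/2}). -/
theorem profile_asymptotics (a : ℝ) (ha0 : 0 < a) (hahalf : a < 1 / 2)
    (ξ ξ' ξ'' : ℝ → ℝ)
    (hcont : ContinuousOn ξ (Set.Ici 0))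
    (hcont' : ContinuousOn ξ' (Set.Ici 0))
    (hderiv : ∀ y > (0 : ℝ), HasDerivAt ξ (ξ' y) y)
    (hderiv' : ∀ y > (0 : ℝ), HasDerivAt ξ' (ξ'' y) y)
    (heq : ∀ y > (0 : ℝ),
      ξ'' y + (1 / 4) * ξ' y - (1 / (2 * y)) * ξ y * ξ' y = 0)
    (hξ0 : ξ 0 = 0) (ha : ξ' 0 = a)
    (hbnd : ∀ y > (0 : ℝ), 0 < ξ' y ∧ ξ' y < a ∧ 0 < ξ y ∧ ξ y < a * y) :
    (∀ y > (0 : ℝ), ξ' y < a * Real.exp (-((1 / 2) * (1 / 2 - a)) * y)) ∧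
    Tendsto ξ' atTop (nhds 0) ∧
    (∃ L : ℝ, Tendsto ξ atTop (nhds L)) ∧
    (∀ y > (0 : ℝ),
      ξ y < (4 * a / (1 - 2 * a)) * (1 - Real.exp ((a - 1 / 2) * y / 2))) := by
  have hδpos : (0:ℝ) < (1/2) * (1/2 - a) := by nlinarith
  set δ : ℝ := (1/2) * (1/2 - a) with hδ
  -- key differential inequality
  have key : ∀ y > (0:ℝ), ξ'' y + δ * ξ' y < 0 := by
    intro y hy
    obtain ⟨hp, hlt, hξp, hξlt⟩ := hbnd y hy
    have h1 := heq y hy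
    have hy2 : (0:ℝ) < 2 * y := by linarith
    have h3 : 1 / (2*y) * ξ y < a / 2 := by
      rw [div_mul_eq_mul_div, one_mul, div_lt_iff₀ hy2] at *
      nlinarith
    have h4 : 1 / (2*y) * ξ y * ξ' y < a / 2 * ξ' y :=
      mul_lt_mul_of_pos_right h3 hp
    have hδ' : δ * ξ' y = (1/4) * ξ' y - (a/2) * ξ' y := by rw [hδ]; ring
    linarith
  -- g = ξ' * exp(δ y) is strictly decreasing on [0,∞)
  have ganti : StrictAntiOn (fun y => ξ' y * Real.exp (δ * y)) (Set.Ici 0) := by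
    apply strictAntiOn_of_deriv_neg (convex_Ici 0)
    · exact hcont'.mul (Real.continuous_exp.comp (continuous_const.mul continuous_id)).continuousOn
    · intro y hy
      rw [interior_Ici] at hy
      have he : HasDerivAt (fun x : ℝ => Real.exp (δ * x)) (δ * Real.exp (δ * y)) y := by
        have := ((hasDerivAt_id y).const_mul δ).exp
        simpa [id, mul_comm] using this
      have hd : HasDerivAt (fun x => ξ' x * Real.exp (δ * x))
          (ξ'' y * Real.exp (δ * y) + ξ' y * (δ * Real.exp (δ * y))) y :=
        (hderiv' y hy).mul he
      rw [hd.deriv]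
      have h5 : ξ'' y * Real.exp (δ * y) + ξ' y * (δ * Real.exp (δ * y))
          = (ξ'' y + δ * ξ' y) * Real.exp (δ * y) := by ring
      rw [h5]
      exact mul_neg_of_neg_of_pos (key y hy) (Real.exp_pos _)
  -- part 1
  have part1 : ∀ y > (0:ℝ), ξ' y < a * Real.exp (-δ * y) := by
    intro y hy
    have h6 : ξ' y * Real.exp (δ * y) < ξ' 0 * Real.exp (δ * 0) :=
      ganti (Set.self_mem_Ici) (Set.mem_Ici.mpr hy.le) hy
    rw [mul_zero, Real.exp_zero, mul_one, ha] at h6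
    have hexp : Real.exp (-δ * y) = (Real.exp (δ * y))⁻¹ := by
      rw [← Real.exp_neg]; ring_nf
    rw [hexp, ← div_eq_mul_inv, lt_div_iff₀ (Real.exp_pos _)]
    exact h6
  -- part 4 (needed before part 3)
  set C : ℝ := 4 * a / (1 - 2 * a) with hC
  have hCpos : 0 < C := by
    apply div_pos (by linarith) (by linarith)
  have hCδ : C * δ = a := by
    rw [hC, hδ, div_mul_eq_mul_div, div_eq_iff (by linarith : (1:ℝ) - 2*a ≠ 0)]; ring
  have part4 : ∀ y > (0:ℝ), ξ y < C * (1 - Real.exp (-δ * y)) := by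
    have hanti : StrictAntiOn (fun y => ξ y - C * (1 - Real.exp (-δ * y))) (Set.Ici 0) := by
      apply strictAntiOn_of_deriv_neg (convex_Ici 0)
      · exact hcont.sub ((continuous_const.mul (continuous_const.sub
          (Real.continuous_exp.comp (continuous_const.mul continuous_id)))).continuousOn)
      · intro y hy
        rw [interior_Ici] at hy
        have he : HasDerivAt (fun x : ℝ => Real.exp (-δ * x)) (-δ * Real.exp (-δ * y)) y := by
          have := ((hasDerivAt_id y).const_mul (-δ)).exp
          simpa [id, mul_comm] using this
        have hd : HasDerivAt (fun x => ξ x - C * (1 - Real.exp (-δ * x)))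
            (ξ' y - C * (0 - (-δ * Real.exp (-δ * y)))) y :=
          (hderiv y hy).sub (((hasDerivAt_const y (1:ℝ)).sub he).const_mul C)
        rw [hd.deriv]
        have h7 : ξ' y - C * (0 - (-δ * Real.exp (-δ * y)))
            = ξ' y - a * Real.exp (-δ * y) := by
          rw [← hCδ]; ring
        rw [h7]
        linarith [part1 y hy]
    intro y hy
    have h8 := hanti (Set.self_mem_Ici) (Set.mem_Ici.mpr hy.le) hy
    simp only [mul_zero, Real.exp_zero, hξ0] at h8
    linarith
  refine ⟨part1, ?_, ?_, ?_⟩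
  -- part 2 : ξ' → 0
  · have hub : Tendsto (fun y : ℝ => a * Real.exp (-δ * y)) atTop (nhds 0) := by
      have h9 : Tendsto (fun y : ℝ => δ * y) atTop atTop :=
        Tendsto.const_mul_atTop hδpos tendsto_id
      have h10 : Tendsto (fun y : ℝ => Real.exp (-(δ * y))) atTop (nhds 0) :=
        Real.tendsto_exp_neg_atTop_nhds_zero.comp h9
      have h11 : Tendsto (fun y : ℝ => a * Real.exp (-(δ * y))) atTop (nhds (a * 0)) :=
        h10.const_mul a
      rw [mul_zero] at h11
      convert h11 using 2 with y
      ring_nf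
    apply tendsto_of_tendsto_of_tendsto_of_le_of_le' tendsto_const_nhds hub
    · filter_upwards [eventually_gt_atTop (0:ℝ)] with y hy
      exact (hbnd y hy).1.le
    · filter_upwards [eventually_gt_atTop (0:ℝ)] with y hy
      exact (part1 y hy).le
  -- part 3 : limit of ξ exists
  · have hmono : StrictMonoOn ξ (Set.Ici 0) := by
      apply strictMonoOn_of_deriv_pos (convex_Ici 0) hcont
      intro y hy
      rw [interior_Ici] at hy
      rw [(hderiv y hy).deriv]
      exact (hbnd y hy).1
    have hboundC : ∀ y ∈ Set.Ici (0:ℝ), ξ y ≤ C := by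
      intro y hy
      rcases eq_or_lt_of_le (Set.mem_Ici.mp hy) with h | h
      · rw [← h, hξ0]; exact hCpos.le
      · have := part4 y h
        have hep : 0 < Real.exp (-δ * y) := Real.exp_pos _
        nlinarith
    set g : ℝ → ℝ := fun y => ξ (max y 0) with hg
    have hgmono : Monotone g := by
      intro x y hxy
      exact (hmono.monotoneOn) (Set.mem_Ici.mpr (le_max_right x 0))
        (Set.mem_Ici.mpr (le_max_right y 0)) (max_le_max hxy le_rfl)
    have hgbdd : BddAbove (Set.range g) := by
      refine ⟨C, ?_⟩
      rintro _ ⟨y, rfl⟩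
      exact hboundC _ (Set.mem_Ici.mpr (le_max_right y 0))
    refine ⟨⨆ y, g y, ?_⟩
    have := tendsto_atTop_ciSup hgmono hgbdd
    apply this.congr'
    filter_upwards [eventually_ge_atTop (0:ℝ)] with y hy
    simp [hg, max_eq_left hy]
  -- part 4 restated
  · intro y hy
    have h12 := part4 y hy
    have h13 : (a - 1/2) * y / 2 = -δ * y := by rw [hδ]; ring
    rw [h13]
    exact h12
end

section
/- Let h ∈ L¹(0,1) be nonnegative with ∫₀¹ h(x) dx < 1, and let α, β : (0,∞) → [0,∞) be bounded functions satisfying α(t) ≤ β(t) + ∫₀¹ h(x) α(xt) dx for all t > 0. If lim_{t→∞} β(t) = 0, then lim_{t→∞} α(t) = 0. -/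
open MeasureTheory Filter

/-- Gronwall-type asymptotic lemma: if `α(t) ≤ β(t) + ∫₀¹ h(x) α(xt) dx` with `h ≥ 0`,
`∫₀¹ h < 1`, `α, β` bounded nonnegative on `(0,∞)`, and `β(t) → 0` as `t → ∞`,
then `α(t) → 0` as `t → ∞`. -/
theorem gronwall_asymptotic (h α β : ℝ → ℝ)
    (hh : IntegrableOn h (Set.Ioo 0 1))
    (hhnn : ∀ x ∈ Set.Ioo (0 : ℝ) 1, 0 ≤ h x)
    (hhint : (∫ x in Set.Ioo (0 : ℝ) 1, h x) < 1)
    (hα : Measurable α)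
    (hαbdd : ∃ A : ℝ, ∀ t > (0 : ℝ), α t ≤ A)
    (hαnn : ∀ t > (0 : ℝ), 0 ≤ α t)
    (hβbdd : ∃ B : ℝ, ∀ t > (0 : ℝ), β t ≤ B)
    (hβnn : ∀ t > (0 : ℝ), 0 ≤ β t)
    (hineq : ∀ t > (0 : ℝ), α t ≤ β t + ∫ x in Set.Ioo (0 : ℝ) 1, h x * α (x * t))
    (hβlim : Tendsto β atTop (nhds 0)) :
    Tendsto α atTop (nhds 0) := by
  obtain ⟨A, hA⟩ := hαbdd
  set A' : ℝ := max A 0 with hA'def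
  have hA'0 : 0 ≤ A' := le_max_right _ _
  have hA' : ∀ t > (0 : ℝ), α t ≤ A' := fun t ht => (hA t ht).trans (le_max_left _ _)
  set c : ℝ := ∫ x in Set.Ioo (0 : ℝ) 1, h x with hcdef
  have hc0 : 0 ≤ c := setIntegral_nonneg measurableSet_Ioo hhnn
  -- boundedness of α under atTop
  have hbdd_above : IsBoundedUnder (· ≤ ·) atTop α :=
    ⟨A', eventually_map.mpr ((eventually_gt_atTop 0).mono fun t ht => hA' t ht)⟩
  have hbdd_below : IsBoundedUnder (· ≥ ·) atTop α :=
    ⟨0, eventually_map.mpr ((eventually_gt_atTop 0).mono fun t ht => hαnn t ht)⟩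
  set L : ℝ := limsup α atTop with hLdef
  have hL0 : (0 : ℝ) ≤ L :=
    le_limsup_of_frequently_le (((eventually_gt_atTop 0).mono fun t ht =>
      hαnn t ht).frequently) hbdd_above
  -- integrability of the integrand for each fixed t > 0
  have hint : ∀ t : ℝ, 0 < t →
      IntegrableOn (fun x => h x * α (x * t)) (Set.Ioo (0 : ℝ) 1) := by
    intro t ht
    have hm : AEStronglyMeasurable (fun x => α (x * t))
        (volume.restrict (Set.Ioo (0 : ℝ) 1)) :=
      (hα.comp (measurable_id.mul_const t)).aestronglyMeasurable
    have hb : ∀ᵐ x ∂(volume.restrict (Set.Ioo (0 : ℝ) 1)), ‖α (x * t)‖ ≤ A' := by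
      filter_upwards [ae_restrict_mem measurableSet_Ioo] with x hx
      have hxt : 0 < x * t := mul_pos hx.1 ht
      rw [Real.norm_eq_abs, abs_of_nonneg (hαnn _ hxt)]
      exact hA' _ hxt
    have := hh.bdd_mul (c := A') hm hb
    exact this.congr (Filter.Eventually.of_forall fun x => mul_comm _ _)
  -- the key estimate: L ≤ c * L + ε for every ε > 0
  have key : ∀ ε > (0 : ℝ), L ≤ c * L + ε := by
    intro ε hε
    have hε3 : 0 < ε / 3 := by linarith
    -- choose δ with small tail integral
    have htail : Tendsto (fun n : ℕ => ∫ x in Set.Ioo (0 : ℝ) (1 / (n + 2)), h x) atTop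
        (nhds 0) := by
      have hanti : Antitone (fun n : ℕ => Set.Ioo (0 : ℝ) (1 / (n + 2))) := by
        intro m n hmn
        apply Set.Ioo_subset_Ioo le_rfl
        apply one_div_le_one_div_of_le (by positivity)
        have : (m : ℝ) ≤ n := Nat.cast_le.mpr hmn
        linarith
      have hempty : (⋂ n : ℕ, Set.Ioo (0 : ℝ) (1 / (n + 2))) = ∅ := by
        ext x
        simp only [Set.mem_iInter, Set.mem_Ioo, Set.mem_empty_iff_false, iff_false, not_forall]
        by_cases hx : 0 < x
        · obtain ⟨n, hn⟩ := exists_nat_gt (1 / x)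
          refine ⟨n, fun hc => ?_⟩
          have h1 : 1 / x < (n : ℝ) + 2 := by linarith
          have h2 : 1 / ((n : ℝ) + 2) < x := by
            rw [div_lt_iff₀ (by positivity)]
            rw [div_lt_iff₀ hx] at h1
            linarith
          exact absurd hc.2 (not_lt.mpr h2.le)
        · exact ⟨0, fun hc => hx hc.1⟩
      have := tendsto_setIntegral_of_antitone
        (f := h) (μ := volume) (s := fun n : ℕ => Set.Ioo (0 : ℝ) (1 / (n + 2)))
        (fun n => measurableSet_Ioo) hanti
        ⟨0, hh.mono_set (by
          apply Set.Ioo_subset_Ioo le_rfl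
          norm_num)⟩
      rwa [hempty, Measure.restrict_empty, integral_zero_measure] at this
    have hδtarget : 0 < ε / 3 / (A' + 1) := by positivity
    obtain ⟨n, hn⟩ := (htail.eventually (eventually_lt_nhds hδtarget)).exists
    set δ : ℝ := 1 / (n + 2 : ℝ) with hδdef
    have hδ0 : 0 < δ := by positivity
    have hδ1 : δ < 1 := by
      rw [hδdef, div_lt_one (by positivity)]
      have : (0:ℝ) ≤ n := Nat.cast_nonneg n
      linarith
    -- eventual bound on α from limsup
    have hev : ∀ᶠ t in atTop, α t < L + ε / 3 :=
      eventually_lt_of_limsup_lt (by linarith) hbdd_above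
    obtain ⟨T, hT⟩ := eventually_atTop.mp hev
    -- eventual bound on β
    have hβev : ∀ᶠ t in atTop, β t < ε / 3 :=
      hβlim.eventually (eventually_lt_nhds hε3)
    -- main eventual inequality
    have hmain : ∀ᶠ t in atTop, α t ≤ c * L + ε := by
      filter_upwards [hβev, eventually_gt_atTop (0 : ℝ),
        eventually_ge_atTop (T / δ), eventually_ge_atTop (1 : ℝ)] with t hβt ht0 htT ht1
      have hintt := hint t ht0
      -- split the integral
      have hsplit : Set.Ioo (0 : ℝ) 1 = Set.Ioo (0 : ℝ) δ ∪ Set.Ico δ 1 := by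
        rw [Set.Ioo_union_Ico_eq_Ioo hδ0 hδ1.le]
      have hdisj : Disjoint (Set.Ioo (0 : ℝ) δ) (Set.Ico δ 1) := by
        rw [Set.disjoint_left]
        rintro x hx1 hx2
        exact absurd hx1.2 (not_lt.mpr hx2.1)
      have hint1 : IntegrableOn (fun x => h x * α (x * t)) (Set.Ioo (0 : ℝ) δ) :=
        hintt.mono_set (by rw [hsplit]; exact Set.subset_union_left)
      have hint2 : IntegrableOn (fun x => h x * α (x * t)) (Set.Ico δ 1) :=
        hintt.mono_set (by rw [hsplit]; exact Set.subset_union_right)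
      have heq : (∫ x in Set.Ioo (0 : ℝ) 1, h x * α (x * t))
          = (∫ x in Set.Ioo (0 : ℝ) δ, h x * α (x * t))
            + ∫ x in Set.Ico δ 1, h x * α (x * t) := by
        rw [hsplit]
        exact setIntegral_union hdisj measurableSet_Ico hint1 hint2
      -- bound the first piece
      have hhδ : IntegrableOn h (Set.Ioo (0 : ℝ) δ) :=
        hh.mono_set (Set.Ioo_subset_Ioo le_rfl hδ1.le)
      have hb1 : (∫ x in Set.Ioo (0 : ℝ) δ, h x * α (x * t)) ≤ ε / 3 := by
        have step1 : (∫ x in Set.Ioo (0 : ℝ) δ, h x * α (x * t))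
            ≤ ∫ x in Set.Ioo (0 : ℝ) δ, h x * A' := by
          apply setIntegral_mono_on hint1 (hhδ.mul_const A') measurableSet_Ioo
          intro x hx
          have hx01 : x ∈ Set.Ioo (0 : ℝ) 1 := ⟨hx.1, hx.2.trans hδ1⟩
          exact mul_le_mul_of_nonneg_left (hA' _ (mul_pos hx.1 ht0)) (hhnn x hx01)
        have step2 : (∫ x in Set.Ioo (0 : ℝ) δ, h x * A')
            = (∫ x in Set.Ioo (0 : ℝ) δ, h x) * A' := by
          rw [integral_mul_const]
        have step3 : (∫ x in Set.Ioo (0 : ℝ) δ, h x) * A' ≤ ε / 3 / (A' + 1) * A' :=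
          mul_le_mul_of_nonneg_right hn.le hA'0
        have step4 : ε / 3 / (A' + 1) * A' ≤ ε / 3 := by
          rw [div_mul_eq_mul_div, div_le_iff₀ (by positivity)]
          nlinarith
        linarith
      -- bound the second piece
      have hhδ2 : IntegrableOn h (Set.Ico δ 1) :=
        hh.mono_set (fun x hx => ⟨lt_of_lt_of_le hδ0 hx.1, hx.2⟩)
      have hb2 : (∫ x in Set.Ico δ 1, h x * α (x * t)) ≤ c * (L + ε / 3) := by
        have step1 : (∫ x in Set.Ico δ 1, h x * α (x * t))
            ≤ ∫ x in Set.Ico δ 1, h x * (L + ε / 3) := by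
          apply setIntegral_mono_on hint2 (hhδ2.mul_const _) measurableSet_Ico
          intro x hx
          have hx01 : x ∈ Set.Ioo (0 : ℝ) 1 := ⟨lt_of_lt_of_le hδ0 hx.1, hx.2⟩
          have hxtT : T ≤ x * t := by
            have h1 : δ * t ≤ x * t :=
              mul_le_mul_of_nonneg_right hx.1 ht0.le
            have h2 : T ≤ δ * t := by
              rw [div_le_iff₀ hδ0] at htT
              linarith [mul_comm δ t]
            linarith
          exact mul_le_mul_of_nonneg_left (hT _ hxtT).le (hhnn x hx01)
        have step2 : (∫ x in Set.Ico δ 1, h x * (L + ε / 3))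
            = (∫ x in Set.Ico δ 1, h x) * (L + ε / 3) := integral_mul_const _ _
        have step3 : (∫ x in Set.Ico δ 1, h x) ≤ c := by
          apply setIntegral_mono_set hh
          · filter_upwards [ae_restrict_mem measurableSet_Ioo] with x hx
            exact hhnn x hx
          · exact Filter.Eventually.of_forall
              (fun x hx => ⟨lt_of_lt_of_le hδ0 hx.1, hx.2⟩)
        have step4 : (∫ x in Set.Ico δ 1, h x) * (L + ε / 3) ≤ c * (L + ε / 3) :=
          mul_le_mul_of_nonneg_right step3 (by linarith)
        linarith
      have := hineq t ht0
      rw [heq] at this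
      have hcle : c * (L + ε / 3) ≤ c * L + ε / 3 := by nlinarith
      linarith
    -- conclude via limsup
    exact limsup_le_of_le hbdd_below.isCoboundedUnder_le hmain
  -- deduce L ≤ 0
  have hLc : L ≤ c * L := by
    by_contra hcon
    push_neg at hcon
    have hε : 0 < (L - c * L) / 2 := by linarith
    have := key _ hε
    linarith
  have hL : L ≤ 0 := by nlinarith
  -- conclude
  refine tendsto_of_le_liminf_of_limsup_le ?_ hL hbdd_above hbdd_below
  exact le_liminf_of_le hbdd_above.isCoboundedUnder_ge
    ((eventually_gt_atTop 0).mono fun t ht => hαnn t ht)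
end
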